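/- Suppose every DtN operator T^(i) and outgoing data h^(i) at tree level ℓ+1 satisfy u_ext = T·g_ext + h for any solution u of the PDE on the corresponding node (where u_ext and g_ext are the normal derivative and trace of u on the node's boundary). Then the merged operators T^(j) = A − B D⁻¹ C and h^(j) = h_ext^(child) − B D⁻¹ h_int^(child) from the Schur-complement merge satisfy the same relation on the parent node j, provided the solution and its normal derivative are continuous across the merge interfaces. -/

import Mathlib

/-! Solve the interior block row `C g_ext + D g_int + h_int = 0` for `g_int` (possible since `D`
is invertible) and substitute into the exterior row `u_ext = A g_ext + B g_int + h_ext`; what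
remains is the Schur complement `A - B D⁻¹ C` acting on `g_ext` plus the corrected data. -/

namespace Matrix

variable {n m R : Type*} [Fintype n] [Fintype m] [DecidableEq m] [CommRing R]

theorem eq_neg_inv_mulVec_of_mulVec_add_mulVec_add_eq_zero {C : Matrix m n R} {D : Matrix m m R}
    (hD : IsUnit D.det) {x : n → R} {y c : m → R} (h : C *ᵥ x + D *ᵥ y + c = 0) :
    y = -(D⁻¹ *ᵥ (C *ᵥ x + c)) := by
  have hDy : C *ᵥ x + c = -(D *ᵥ y) := by
    rw [← sub_eq_zero, sub_neg_eq_add, ← h]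
    abel
  rw [hDy, mulVec_neg, neg_neg, mulVec_mulVec, nonsing_inv_mul D hD, one_mulVec]

theorem mulVec_add_mulVec_neg_inv_mulVec (A : Matrix n n R) (B : Matrix n m R)
    (C : Matrix m n R) (D : Matrix m m R) (x : n → R) (a : n → R) (c : m → R) :
    A *ᵥ x + B *ᵥ -(D⁻¹ *ᵥ (C *ᵥ x + c)) + a = (A - B * D⁻¹ * C) *ᵥ x + (a - (B * D⁻¹) *ᵥ c) := by
  simp only [sub_mulVec, mulVec_neg, mulVec_add, mulVec_mulVec, Matrix.mul_assoc]
  abel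

end Matrix

/-- Correctness of the Schur-complement merge: if the merge constraint system holds
(continuity of the solution and of its normal derivative across the interfaces),
then the merged DtN operator `T = A − B D⁻¹ C` and outgoing data
`h = h_ext − B D⁻¹ h_int` satisfy `u_ext = T g_ext + h` on the parent node. -/
theorem hps_merge_correctness
    {n m : Type*} [Fintype n] [Fintype m] [DecidableEq m]
    (A : Matrix n n ℝ) (B : Matrix n m ℝ) (C : Matrix m n ℝ) (D : Matrix m m ℝ)
    (hD : IsUnit D.det)
    (g_ext u_ext h_ext : n → ℝ) (g_int h_int : m → ℝ)
    (hcont₁ : u_ext = A.mulVec g_ext + B.mulVec g_int + h_ext)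
    (hcont₂ : C.mulVec g_ext + D.mulVec g_int + h_int = 0) :
    u_ext = (A - B * D⁻¹ * C).mulVec g_ext + (h_ext - (B * D⁻¹).mulVec h_int) := by
  rw [hcont₁, Matrix.eq_neg_inv_mulVec_of_mulVec_add_mulVec_add_eq_zero hD hcont₂,
    Matrix.mulVec_add_mulVec_neg_inv_mulVec]
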